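/- arXiv:2605.14796 — 2 statements merged into one kernel-verified Lean document; each statement's English description precedes it below -/
import Mathlib

section
/- Suppose a probability generating function G on [0,1] satisfies the functional equation G(u) = G(1 − α + α·u) · H(u) for all u ∈ [0,1], where H is the pgf of a random variable ε with mean μ_ε and variance σ_ε², α ∈ (0,1), and G corresponds to a random variable X with finite second moment. Then E[X] = μ_ε/(1−α) and Var(X) = (α·μ_ε + σ_ε²)/(1−α²). -/
/-!
Write `G` and `H` for the two generating functions. Since `G(1) = H(1) = 1`, differentiating
`G(u) = G(1 - α + α u) H(u)` once and twice at `u = 1` gives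
`G'(1) = α G'(1) + H'(1)` and `G''(1) = α² G''(1) + 2α G'(1) H'(1) + H''(1)`.
These are linear equations for the factorial moments `E[X] = G'(1)` and `E[X(X-1)] = G''(1)`.
The derivatives at the boundary point `1` exist as one-sided derivatives: when the moments are
finite, the termwise differentiated series converge uniformly on `[-1, 1]`.
-/

open Set Filter

noncomputable def pgf (c : ℕ → ℝ) (u : ℝ) : ℝ := ∑' n, c n * u ^ n

def derivCoeff (c : ℕ → ℝ) (n : ℕ) : ℝ := (n + 1) * c (n + 1)

section GeneratingFunction

variable {c : ℕ → ℝ}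

lemma summable_of_summable_nat_mul (hc : ∀ n, 0 ≤ c n)
    (h : Summable fun n : ℕ => (n : ℝ) * c n) : Summable c := by
  refine (summable_nat_add_iff 1).1 <| ((summable_nat_add_iff 1).2 h).of_nonneg_of_le
    (fun n => hc _) fun n => ?_
  push_cast
  exact le_mul_of_one_le_left (hc _) (by linarith [n.cast_nonneg (α := ℝ)])

lemma summable_nat_mul_of_summable_sq_mul (hc : ∀ n, 0 ≤ c n)
    (h : Summable fun n : ℕ => (n : ℝ) ^ 2 * c n) : Summable fun n : ℕ => (n : ℝ) * c n :=
  summable_of_summable_nat_mul (fun n => mul_nonneg n.cast_nonneg (hc n)) <| by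
    simpa only [sq, mul_assoc] using h

lemma derivCoeff_nonneg (hc : ∀ n, 0 ≤ c n) (n : ℕ) : 0 ≤ derivCoeff c n :=
  mul_nonneg (by positivity) (hc _)

lemma summable_derivCoeff (h : Summable fun n : ℕ => (n : ℝ) * c n) :
    Summable (derivCoeff c) :=
  ((summable_nat_add_iff 1).2 h).congr fun n => by simp [derivCoeff]

lemma summable_nat_mul_derivCoeff (hc : ∀ n, 0 ≤ c n)
    (h : Summable fun n : ℕ => (n : ℝ) ^ 2 * c n) :
    Summable fun n : ℕ => (n : ℝ) * derivCoeff c n := by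
  refine ((summable_nat_add_iff 1).2 h).of_nonneg_of_le
    (fun n => mul_nonneg n.cast_nonneg (derivCoeff_nonneg hc n)) fun n => ?_
  push_cast [derivCoeff]
  nlinarith [hc (n + 1), n.cast_nonneg (α := ℝ)]

lemma tsum_derivCoeff (h : Summable fun n : ℕ => (n : ℝ) * c n) :
    ∑' n, derivCoeff c n = ∑' n : ℕ, (n : ℝ) * c n := by
  rw [h.tsum_eq_zero_add]
  simp [derivCoeff]

lemma tsum_nat_mul_derivCoeff (h₁ : Summable fun n : ℕ => (n : ℝ) * c n)
    (h₂ : Summable fun n : ℕ => (n : ℝ) ^ 2 * c n) :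
    ∑' n : ℕ, (n : ℝ) * derivCoeff c n
      = ∑' n : ℕ, (n : ℝ) ^ 2 * c n - ∑' n : ℕ, (n : ℝ) * c n := by
  rw [← h₂.tsum_sub h₁, (h₂.sub h₁).tsum_eq_zero_add]
  simp only [derivCoeff, Nat.cast_zero, Nat.cast_add_one, zero_pow two_ne_zero, zero_mul,
    sub_self, zero_add]
  exact tsum_congr fun n => by ring

lemma pgf_one : pgf c 1 = ∑' n, c n := by
  simp [pgf]

lemma pgf_derivCoeff_one (h : Summable fun n : ℕ => (n : ℝ) * c n) :
    pgf (derivCoeff c) 1 = ∑' n : ℕ, (n : ℝ) * c n := by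
  rw [pgf_one, tsum_derivCoeff h]

lemma pgf_derivCoeff_derivCoeff_one (hc : ∀ n, 0 ≤ c n)
    (h : Summable fun n : ℕ => (n : ℝ) ^ 2 * c n) :
    pgf (derivCoeff (derivCoeff c)) 1
      = ∑' n : ℕ, (n : ℝ) ^ 2 * c n - ∑' n : ℕ, (n : ℝ) * c n := by
  rw [pgf_derivCoeff_one (summable_nat_mul_derivCoeff hc h),
    tsum_nat_mul_derivCoeff (summable_nat_mul_of_summable_sq_mul hc h) h]

lemma norm_mul_pow_le_of_abs_le_one {a x : ℝ} (ha : 0 ≤ a) (hx : |x| ≤ 1) (n : ℕ) :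
    ‖a * x ^ n‖ ≤ a := by
  rw [norm_mul, norm_pow, Real.norm_of_nonneg ha, Real.norm_eq_abs]
  exact mul_le_of_le_one_right ha (pow_le_one₀ (abs_nonneg x) hx)

lemma continuousOn_pgf (hc : ∀ n, 0 ≤ c n) (hs : Summable c) :
    ContinuousOn (pgf c) (Icc (-1) 1) :=
  continuousOn_tsum (fun n => (continuous_const.mul (continuous_pow n)).continuousOn) hs
    fun n _ hx => norm_mul_pow_le_of_abs_le_one (hc n) (abs_le.2 hx) n

lemma hasDerivAt_pgf (hc : ∀ n, 0 ≤ c n) (h : Summable fun n : ℕ => (n : ℝ) * c n) {x : ℝ}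
    (hx : x ∈ Ioo (-1) 1) : HasDerivAt (pgf c) (pgf (derivCoeff c) x) x := by
  have hbound : ∀ n (y : ℝ), |y| ≤ 1 → ‖c n * (n * y ^ (n - 1))‖ ≤ n * c n := fun n y hy => by
    rw [mul_left_comm, ← mul_assoc]
    exact norm_mul_pow_le_of_abs_le_one (mul_nonneg n.cast_nonneg (hc n)) hy _
  have hderiv := hasDerivAt_tsum_of_isPreconnected h isOpen_Ioo isPreconnected_Ioo
    (fun n y _ => (hasDerivAt_pow n y).const_mul (c n))
    (fun n y hy => hbound n y (abs_le.2 ⟨hy.1.le, hy.2.le⟩))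
    (show (0 : ℝ) ∈ Ioo (-1) 1 by norm_num)
    ((summable_nat_add_iff 1).1 (by simp)) hx
  refine hderiv.congr_deriv ?_
  rw [(h.of_norm_bounded fun n => hbound n x (abs_le.2 ⟨hx.1.le, hx.2.le⟩)).tsum_eq_zero_add]
  simp only [pgf, derivCoeff, Nat.cast_zero, zero_mul, mul_zero, zero_add, Nat.cast_add_one,
    add_tsub_cancel_right]
  exact tsum_congr fun n => by ring

lemma hasDerivWithinAt_pgf (hc : ∀ n, 0 ≤ c n) (h : Summable fun n : ℕ => (n : ℝ) * c n)
    {x : ℝ} (hx : x ∈ Ioc (-1) 1) :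
    HasDerivWithinAt (pgf c) (pgf (derivCoeff c) x) (Iic 1) x := by
  rcases hx.2.lt_or_eq with hx1 | rfl
  · exact (hasDerivAt_pgf hc h ⟨hx.1, hx1⟩).hasDerivWithinAt
  have hone : (1 : ℝ) ∈ Icc (-1) 1 := by norm_num
  refine hasDerivWithinAt_Iic_of_tendsto_deriv (s := Ioo (-1) 1)
    (fun y hy => (hasDerivAt_pgf hc h hy).differentiableAt.differentiableWithinAt)
    ((continuousOn_pgf hc (summable_of_summable_nat_mul hc h) 1 hone).mono Ioo_subset_Icc_self)
    (Ioo_mem_nhdsLT (by norm_num)) ?_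
  rw [← nhdsWithin_Ioo_eq_nhdsLT (show (-1 : ℝ) < 1 by norm_num)]
  refine Tendsto.congr' ?_
    ((continuousOn_pgf (derivCoeff_nonneg hc) (summable_derivCoeff h) 1 hone).mono
      Ioo_subset_Icc_self)
  filter_upwards [self_mem_nhdsWithin] with y hy
  exact (hasDerivAt_pgf hc h hy).deriv.symm

lemma hasDerivWithinAt_pgf_Icc (hc : ∀ n, 0 ≤ c n) (h : Summable fun n : ℕ => (n : ℝ) * c n) :
    ∀ x ∈ Icc (0 : ℝ) 1, HasDerivWithinAt (pgf c) (pgf (derivCoeff c) x) (Icc 0 1) x :=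
  fun x hx => (hasDerivWithinAt_pgf hc h ⟨by linarith [hx.1], hx.2⟩).mono fun _ hy => hy.2

lemma hasDerivWithinAt_pgf_derivCoeff_Icc (hc : ∀ n, 0 ≤ c n)
    (h : Summable fun n : ℕ => (n : ℝ) ^ 2 * c n) :
    ∀ x ∈ Icc (0 : ℝ) 1,
      HasDerivWithinAt (pgf (derivCoeff c)) (pgf (derivCoeff (derivCoeff c)) x) (Icc 0 1) x :=
  hasDerivWithinAt_pgf_Icc (derivCoeff_nonneg hc) (summable_nat_mul_derivCoeff hc h)

end GeneratingFunction

lemma Set.EqOn.eqOn_of_hasDerivWithinAt {f g f' g' : ℝ → ℝ} {s : Set ℝ} (hfg : EqOn f g s)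
    (hs : UniqueDiffOn ℝ s) (hf : ∀ x ∈ s, HasDerivWithinAt f (f' x) s x)
    (hg : ∀ x ∈ s, HasDerivWithinAt g (g' x) s x) : EqOn f' g' s :=
  fun x hx => (hs x hx).eq_deriv s (hf x hx) ((hg x hx).congr hfg (hfg hx))

section AffineFunctionalEquation

variable {α : ℝ} {G G' G'' H H' H'' : ℝ → ℝ}

lemma mapsTo_affine_Icc (hα : α ∈ Icc (0 : ℝ) 1) :
    MapsTo (fun u => 1 - α + α * u) (Icc 0 1) (Icc 0 1) :=
  fun u hu => ⟨by nlinarith [hα.1, hα.2, hu.1, hu.2], by nlinarith [hα.1, hα.2, hu.1, hu.2]⟩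

lemma hasDerivWithinAt_comp_affine (hα : α ∈ Icc (0 : ℝ) 1)
    (hG : ∀ x ∈ Icc (0 : ℝ) 1, HasDerivWithinAt G (G' x) (Icc 0 1) x) {x : ℝ}
    (hx : x ∈ Icc (0 : ℝ) 1) :
    HasDerivWithinAt (fun u => G (1 - α + α * u)) (G' (1 - α + α * x) * α) (Icc 0 1) x := by
  have hv : HasDerivAt (fun u => 1 - α + α * u) α x := by
    simpa using ((hasDerivAt_id x).const_mul α).const_add (1 - α)
  exact (hG _ (mapsTo_affine_Icc hα hx)).comp x hv.hasDerivWithinAt (mapsTo_affine_Icc hα)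

lemma eqOn_deriv_of_eqOn_comp_affine_mul (hα : α ∈ Icc (0 : ℝ) 1)
    (hG : ∀ x ∈ Icc (0 : ℝ) 1, HasDerivWithinAt G (G' x) (Icc 0 1) x)
    (hH : ∀ x ∈ Icc (0 : ℝ) 1, HasDerivWithinAt H (H' x) (Icc 0 1) x)
    (hfe : EqOn G (fun u => G (1 - α + α * u) * H u) (Icc 0 1)) :
    EqOn G' (fun u => G' (1 - α + α * u) * α * H u + G (1 - α + α * u) * H' u) (Icc 0 1) :=
  hfe.eqOn_of_hasDerivWithinAt uniqueDiffOn_Icc_zero_one hG fun x hx =>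
    (hasDerivWithinAt_comp_affine hα hG hx).mul (hH x hx)

lemma eqOn_deriv2_of_eqOn_comp_affine_mul (hα : α ∈ Icc (0 : ℝ) 1)
    (hG : ∀ x ∈ Icc (0 : ℝ) 1, HasDerivWithinAt G (G' x) (Icc 0 1) x)
    (hG' : ∀ x ∈ Icc (0 : ℝ) 1, HasDerivWithinAt G' (G'' x) (Icc 0 1) x)
    (hH : ∀ x ∈ Icc (0 : ℝ) 1, HasDerivWithinAt H (H' x) (Icc 0 1) x)
    (hH' : ∀ x ∈ Icc (0 : ℝ) 1, HasDerivWithinAt H' (H'' x) (Icc 0 1) x)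
    (hfe : EqOn G (fun u => G (1 - α + α * u) * H u) (Icc 0 1)) :
    EqOn G'' (fun u => G'' (1 - α + α * u) * α * α * H u + G' (1 - α + α * u) * α * H' u
      + (G' (1 - α + α * u) * α * H' u + G (1 - α + α * u) * H'' u)) (Icc 0 1) :=
  (eqOn_deriv_of_eqOn_comp_affine_mul hα hG hH hfe).eqOn_of_hasDerivWithinAt
    uniqueDiffOn_Icc_zero_one hG' fun x hx =>
      (((hasDerivWithinAt_comp_affine hα hG' hx).mul_const α).mul (hH x hx)).add
        ((hasDerivWithinAt_comp_affine hα hG hx).mul (hH' x hx))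

lemma derivs_one_of_eqOn_comp_affine_mul (hα : α ∈ Icc (0 : ℝ) 1)
    (hG : ∀ x ∈ Icc (0 : ℝ) 1, HasDerivWithinAt G (G' x) (Icc 0 1) x)
    (hG' : ∀ x ∈ Icc (0 : ℝ) 1, HasDerivWithinAt G' (G'' x) (Icc 0 1) x)
    (hH : ∀ x ∈ Icc (0 : ℝ) 1, HasDerivWithinAt H (H' x) (Icc 0 1) x)
    (hH' : ∀ x ∈ Icc (0 : ℝ) 1, HasDerivWithinAt H' (H'' x) (Icc 0 1) x)
    (hfe : EqOn G (fun u => G (1 - α + α * u) * H u) (Icc 0 1)) :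
    G' 1 = G' 1 * α * H 1 + G 1 * H' 1 ∧
      G'' 1 = G'' 1 * α * α * H 1 + G' 1 * α * H' 1 + (G' 1 * α * H' 1 + G 1 * H'' 1) := by
  have hone : (1 : ℝ) ∈ Icc (0 : ℝ) 1 := by norm_num
  have h₁ := eqOn_deriv_of_eqOn_comp_affine_mul hα hG hH hfe hone
  have h₂ := eqOn_deriv2_of_eqOn_comp_affine_mul hα hG hG' hH hH' hfe hone
  simp only [mul_one, sub_add_cancel] at h₁ h₂
  exact ⟨h₁, h₂⟩

end AffineFunctionalEquation

theorem moments_from_functional_equation_general (p e : ℕ → ℝ) (α : ℝ)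
    (hα : α ∈ Set.Ioo (0:ℝ) 1)
    (hp : ∀ n, 0 ≤ p n) (hp1 : (∑' n, p n) = 1)
    (he : ∀ n, 0 ≤ e n) (he1 : (∑' n, e n) = 1)
    (hpm2 : Summable fun n : ℕ => (n : ℝ) ^ 2 * p n)
    (hem2 : Summable fun n : ℕ => (n : ℝ) ^ 2 * e n)
    (hfe : ∀ u ∈ Set.Icc (0:ℝ) 1,
      (∑' n : ℕ, p n * u ^ n)
        = (∑' n : ℕ, p n * (1 - α + α * u) ^ n) * (∑' n : ℕ, e n * u ^ n)) :
    (∑' n : ℕ, (n : ℝ) * p n) = (∑' n : ℕ, (n : ℝ) * e n) / (1 - α) ∧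
    (∑' n : ℕ, (n : ℝ) ^ 2 * p n) - (∑' n : ℕ, (n : ℝ) * p n) ^ 2
      = (α * (∑' n : ℕ, (n : ℝ) * e n)
          + ((∑' n : ℕ, (n : ℝ) ^ 2 * e n) - (∑' n : ℕ, (n : ℝ) * e n) ^ 2))
        / (1 - α ^ 2) := by
  have hpm1 := summable_nat_mul_of_summable_sq_mul hp hpm2
  have hem1 := summable_nat_mul_of_summable_sq_mul he hem2
  obtain ⟨hE1, hE2⟩ := derivs_one_of_eqOn_comp_affine_mul (Ioo_subset_Icc_self hα)
    (hasDerivWithinAt_pgf_Icc hp hpm1) (hasDerivWithinAt_pgf_derivCoeff_Icc hp hpm2)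
    (hasDerivWithinAt_pgf_Icc he hem1) (hasDerivWithinAt_pgf_derivCoeff_Icc he hem2) hfe
  rw [pgf_derivCoeff_derivCoeff_one hp hpm2, pgf_derivCoeff_derivCoeff_one he hem2] at hE2
  rw [pgf_derivCoeff_one hpm1, pgf_derivCoeff_one hem1, pgf_one (c := p), pgf_one (c := e),
    hp1, he1] at hE1 hE2
  have h1α : 1 - α ≠ 0 := by linarith [hα.2]
  have h1α2 : 1 - α ^ 2 ≠ 0 := by nlinarith [hα.1, hα.2]
  constructor
  · rw [eq_div_iff h1α]
    linear_combination hE1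
  · rw [eq_div_iff h1α2]
    linear_combination hE2 - ((∑' n : ℕ, (n : ℝ) * e n)
      + (1 + α) * ((∑' n : ℕ, (n : ℝ) * p n) - 1)) * hE1

/-- If the pgf `G` of a count random variable `X` (pmf `p`, finite second moment)
satisfies `G(u) = G(1-α+α·u) · H(u)` on `[0,1]`, where `H` is the pgf of a count
random variable `ε` (pmf `e`) with mean `μ_ε` and variance `σ_ε²`, then
`E[X] = μ_ε/(1-α)` and `Var(X) = (α·μ_ε + σ_ε²)/(1-α²)`. -/
theorem moments_from_functional_equation (p e : ℕ → ℝ) (α : ℝ)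
    (hα : α ∈ Set.Ioo (0:ℝ) 1)
    (hp : ∀ n, 0 ≤ p n) (hp1 : (∑' n, p n) = 1)
    (he : ∀ n, 0 ≤ e n) (he1 : (∑' n, e n) = 1)
    (hpm1 : Summable fun n : ℕ => (n : ℝ) * p n)
    (hpm2 : Summable fun n : ℕ => (n : ℝ) ^ 2 * p n)
    (hem1 : Summable fun n : ℕ => (n : ℝ) * e n)
    (hem2 : Summable fun n : ℕ => (n : ℝ) ^ 2 * e n)
    (hfe : ∀ u ∈ Set.Icc (0:ℝ) 1,
      (∑' n : ℕ, p n * u ^ n)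
        = (∑' n : ℕ, p n * (1 - α + α * u) ^ n) * (∑' n : ℕ, e n * u ^ n)) :
    (∑' n : ℕ, (n : ℝ) * p n) = (∑' n : ℕ, (n : ℝ) * e n) / (1 - α) ∧
    (∑' n : ℕ, (n : ℝ) ^ 2 * p n) - (∑' n : ℕ, (n : ℝ) * p n) ^ 2
      = (α * (∑' n : ℕ, (n : ℝ) * e n)
          + ((∑' n : ℕ, (n : ℝ) ^ 2 * e n) - (∑' n : ℕ, (n : ℝ) * e n) ^ 2))
        / (1 - α ^ 2) :=
  moments_from_functional_equation_general p e α hα hp hp1 he he1 hpm2 hem2 hfe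
end

section
/- For the CINAR(1,1) closed-form ACF, λ as defined in Corollary 1 is the smaller root of x ↦ α(φ_{10}+αφ_{01}φ_{11})x² − (1+α²(φ_{10}²−φ_{01}²−φ_{11}²))x + α(φ_{10}+αφ_{01}φ_{11}); when the discriminant is nonnegative and α(φ_{10}+αφ_{01}φ_{11}) > 0, both roots are real and positive with product 1, so λ ∈ (0,1]. -/
/-- `λ` from the CINAR(1,1) closed-form ACF is the smaller root of the quadratic
`x ↦ a·x² − b·x + a` with `a = α(φ₁₀+αφ₀₁φ₁₁)` and
`b = 1+α²(φ₁₀²−φ₀₁²−φ₁₁²)`; both roots are real and positive with product `1`,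
so `λ ∈ (0,1]`, assuming the discriminant `b² − 4a²` is nonnegative and `a > 0`. -/
theorem cinar11_lambda_root (α φ01 φ10 φ11 : ℝ)
    (hα : α ∈ Set.Ioo (0:ℝ) 1)
    (hφ01 : 0 ≤ φ01) (hφ10 : 0 ≤ φ10) (hφ11 : 0 ≤ φ11)
    (hsum : φ01 + φ10 + φ11 = 1)
    (a b lam lam' : ℝ)
    (ha : a = α * (φ10 + α * φ01 * φ11))
    (hb : b = 1 + α ^ 2 * (φ10 ^ 2 - φ01 ^ 2 - φ11 ^ 2))
    (hapos : 0 < a)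
    (hdisc : 0 ≤ b ^ 2 - 4 * a ^ 2)
    (hlam : lam = (b - Real.sqrt (b ^ 2 - 4 * a ^ 2)) / (2 * a))
    (hlam' : lam' = (b + Real.sqrt (b ^ 2 - 4 * a ^ 2)) / (2 * a)) :
    a * lam ^ 2 - b * lam + a = 0 ∧
    a * lam' ^ 2 - b * lam' + a = 0 ∧
    lam ≤ lam' ∧ 0 < lam ∧ 0 < lam' ∧ lam * lam' = 1 ∧ lam ≤ 1 := by
  obtain ⟨hα0, hα1⟩ := hα
  set s := Real.sqrt (b ^ 2 - 4 * a ^ 2) with hs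
  have hs0 : 0 ≤ s := Real.sqrt_nonneg _
  have hs2 : s ^ 2 = b ^ 2 - 4 * a ^ 2 := Real.sq_sqrt hdisc
  have hbpos : 0 < b := by
    have hu1 : φ01 ^ 2 + φ11 ^ 2 ≤ 1 := by
      nlinarith [mul_nonneg hφ01 hφ11, mul_nonneg hφ10 hφ01, mul_nonneg hφ10 hφ11,
        mul_nonneg hφ10 hφ10]
    have hα2 : α ^ 2 < 1 := by nlinarith
    have h3 : α ^ 2 * (φ01 ^ 2 + φ11 ^ 2) ≤ α ^ 2 * 1 :=
      mul_le_mul_of_nonneg_left hu1 (sq_nonneg α)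
    nlinarith [sq_nonneg (α * φ10)]
  have hsb : s < b := by nlinarith [sq_nonneg (s - b)]
  have h2a : (0:ℝ) < 2 * a := by linarith
  have hane : (2 * a) ≠ 0 := ne_of_gt h2a
  have e1 : 2 * a * lam = b - s := by rw [hlam]; field_simp
  have e2 : 2 * a * lam' = b + s := by rw [hlam']; field_simp
  have h4a : (4 * a) ≠ 0 := by positivity
  have h1 : a * lam ^ 2 - b * lam + a = 0 := by
    have key : 4 * a * (a * lam ^ 2 - b * lam + a) = 0 := by
      calc 4 * a * (a * lam ^ 2 - b * lam + a)
          = (2 * a * lam) ^ 2 - 2 * b * (2 * a * lam) + 4 * a ^ 2 := by ring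
        _ = (b - s) ^ 2 - 2 * b * (b - s) + 4 * a ^ 2 := by rw [e1]
        _ = s ^ 2 - (b ^ 2 - 4 * a ^ 2) := by ring
        _ = 0 := by rw [hs2]; ring
    exact (mul_eq_zero.mp key).resolve_left h4a
  have h2 : a * lam' ^ 2 - b * lam' + a = 0 := by
    have key : 4 * a * (a * lam' ^ 2 - b * lam' + a) = 0 := by
      calc 4 * a * (a * lam' ^ 2 - b * lam' + a)
          = (2 * a * lam') ^ 2 - 2 * b * (2 * a * lam') + 4 * a ^ 2 := by ring
        _ = (b + s) ^ 2 - 2 * b * (b + s) + 4 * a ^ 2 := by rw [e2]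
        _ = s ^ 2 - (b ^ 2 - 4 * a ^ 2) := by ring
        _ = 0 := by rw [hs2]; ring
    exact (mul_eq_zero.mp key).resolve_left h4a
  have hle : lam ≤ lam' := by rw [hlam, hlam']; gcongr; linarith
  have hlampos : 0 < lam := by rw [hlam]; exact div_pos (by linarith) h2a
  have hlampos' : 0 < lam' := by rw [hlam']; exact div_pos (by linarith) h2a
  have hprod : lam * lam' = 1 := by
    have key : (2 * a) ^ 2 * (lam * lam') = (2 * a) ^ 2 * 1 := by
      calc (2 * a) ^ 2 * (lam * lam') = (2 * a * lam) * (2 * a * lam') := by ring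
        _ = (b - s) * (b + s) := by rw [e1, e2]
        _ = b ^ 2 - s ^ 2 := by ring
        _ = (2 * a) ^ 2 * 1 := by rw [hs2]; ring
    exact mul_left_cancel₀ (by positivity) key
  have hle1 : lam ≤ 1 := by nlinarith
  exact ⟨h1, h2, hle, hlampos, hlampos', hprod, hle1⟩
end
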